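/- arXiv:2101.04339 — 6 statements merged into one kernel-verified Lean document; each statement's English description precedes it below -/
import Mathlib

section
/- For any two integrable functions f, g : [0,1] → [a,b], if a hash point (x,y) is chosen uniformly at random from [0,1] × [a,b] and the hash h_{(x,y)}(f) equals 1 if f(x) > y, -1 if f(x) < y, and 0 if f(x) = y, then the probability that h_{(x,y)}(f) = h_{(x,y)}(g) equals 1 - L₁(f,g)/(b-a), where L₁(f,g) = ∫₀¹ |f(x) - g(x)| dx. -/
open MeasureTheory

/-- Point hash: 1 if the function is strictly above the point, -1 if strictly below, 0 on it. -/
noncomputable def pointHash (φ : ℝ → ℝ) (p : ℝ × ℝ) : ℤ :=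
  if φ p.1 > p.2 then 1 else if φ p.1 < p.2 then -1 else 0

/-!
Off the graphs of `f` and `g`, which are null sets, the hashes of `f` and `g` at `(x, y)`
disagree exactly when `y` lies strictly between `f x` and `g x`. So, up to a null set, the
collision set is the rectangle minus the region between `min f g` and `max f g`, whose area is
`∫ |f - g|`.
-/

open Set Filter ENNReal

lemma volume_graph_eq_zero {φ : ℝ → ℝ} (hφ : Measurable φ) :
    volume {p : ℝ × ℝ | p.2 = φ p.1} = 0 := by
  rw [Measure.volume_eq_prod, Measure.prod_apply (measurableSet_graph hφ)]
  have hslice (x : ℝ) : Prod.mk x ⁻¹' {p : ℝ × ℝ | p.2 = φ p.1} = {φ x} := by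
    ext y; simp
  simp [hslice]

lemma pointHash_eq_pointHash_iff {f g : ℝ → ℝ} {p : ℝ × ℝ} (hf : p.2 ≠ f p.1)
    (hg : p.2 ≠ g p.1) :
    pointHash f p = pointHash g p ↔ ¬ ((f ⊓ g) p.1 < p.2 ∧ p.2 < (f ⊔ g) p.1) := by
  rcases hf.lt_or_gt with hf | hf <;> rcases hg.lt_or_gt with hg | hg <;>
    simp [pointHash, hf, hg, hf.not_gt, hg.not_gt]

lemma hashCollisions_ae_eq {f g : ℝ → ℝ} (hf : Measurable f) (hg : Measurable g)
    (s : Set ℝ) (a b : ℝ) :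
    {p : ℝ × ℝ | p ∈ s ×ˢ Icc a b ∧ pointHash f p = pointHash g p} =ᵐ[volume]
      (s ×ˢ Icc a b \ regionBetween (f ⊓ g) (f ⊔ g) s : Set (ℝ × ℝ)) := by
  have off_graphs : ∀ᵐ p : ℝ × ℝ, p.2 ≠ f p.1 ∧ p.2 ≠ g p.1 := by
    have := measure_union_null (volume_graph_eq_zero hf) (volume_graph_eq_zero hg)
    filter_upwards [measure_eq_zero_iff_ae_notMem.mp this] with p hp
    simpa [not_or] using hp
  refine eventuallyEq_set.mpr ?_
  filter_upwards [off_graphs] with p ⟨hpf, hpg⟩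
  simp only [Set.mem_sdiff, regionBetween, mem_ofPred_eq, mem_Ioo,
    pointHash_eq_pointHash_iff hpf hpg]
  exact and_congr_right fun hp => by simp [hp.1]

lemma volume_regionBetween_inf_sup {f g : ℝ → ℝ} {s : Set ℝ} (hs : MeasurableSet s)
    (hf : IntegrableOn f s) (hg : IntegrableOn g s) :
    volume (regionBetween (f ⊓ g) (f ⊔ g) s) = ENNReal.ofReal (∫ x in s, |f x - g x|) := by
  rw [Measure.volume_eq_prod, volume_regionBetween_eq_integral (hf.inf hg) (hf.sup hg) hs
    fun x _ => inf_le_sup]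
  congr 1
  refine integral_congr_ae (ae_of_all _ fun x => ?_)
  simp [max_sub_min_eq_abs']

lemma regionBetween_subset_prod_Icc {f g : ℝ → ℝ} {s : Set ℝ} {a b : ℝ}
    (hf : ∀ x ∈ s, f x ∈ Icc a b) (hg : ∀ x ∈ s, g x ∈ Icc a b) :
    regionBetween (f ⊓ g) (f ⊔ g) s ⊆ s ×ˢ Icc a b := by
  rintro ⟨x, y⟩ ⟨hx, hlo, hhi⟩
  exact ⟨hx, (le_inf (hf x hx).1 (hg x hx).1).trans hlo.le,
    hhi.le.trans (sup_le (hf x hx).2 (hg x hx).2)⟩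

theorem volume_hashCollisions {f g : ℝ → ℝ} {s : Set ℝ} {a b : ℝ} (hab : a ≤ b)
    (hs : MeasurableSet s) (hs_fin : volume s ≠ ∞) (hf_meas : Measurable f)
    (hg_meas : Measurable g) (hf : IntegrableOn f s) (hg : IntegrableOn g s)
    (hf_range : ∀ x ∈ s, f x ∈ Icc a b) (hg_range : ∀ x ∈ s, g x ∈ Icc a b) :
    (volume {p : ℝ × ℝ | p ∈ s ×ˢ Icc a b ∧ pointHash f p = pointHash g p}).toReal
      = volume.real s * (b - a) - ∫ x in s, |f x - g x| := by
  have hR : volume.real (s ×ˢ Icc a b) = volume.real s * (b - a) := by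
    rw [Measure.volume_eq_prod, measureReal_prod_prod, Real.volume_real_Icc_of_le hab]
  have hR_fin : volume (s ×ˢ Icc a b) ≠ ∞ := by
    rw [Measure.volume_eq_prod, Measure.prod_prod]
    exact mul_ne_top hs_fin measure_Icc_lt_top.ne
  have hD : volume.real (regionBetween (f ⊓ g) (f ⊔ g) s) = ∫ x in s, |f x - g x| := by
    rw [measureReal_def, volume_regionBetween_inf_sup hs hf hg,
      toReal_ofReal (setIntegral_nonneg hs fun x _ => abs_nonneg _)]
  rw [← measureReal_def, measureReal_congr (hashCollisions_ae_eq hf_meas hg_meas s a b),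
    measureReal_sdiff (regionBetween_subset_prod_Icc hf_range hg_range)
      (measurableSet_regionBetween (hf_meas.inf hg_meas) (hf_meas.sup hg_meas) hs)
      hR_fin, hR, hD]

/-- The collision probability of the `L₁` hash of two functions `f, g : [0,1] → [a,b]`
under a uniform point of `[0,1] × [a,b]` equals `1 - L₁(f,g)/(b-a)`. -/
theorem stmt0 (a b : ℝ) (hab : a < b) (f g : ℝ → ℝ)
    (hfmeas : Measurable f) (hgmeas : Measurable g)
    (hf : IntegrableOn f (Set.Icc 0 1)) (hg : IntegrableOn g (Set.Icc 0 1))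
    (hfr : ∀ x ∈ Set.Icc (0:ℝ) 1, f x ∈ Set.Icc a b)
    (hgr : ∀ x ∈ Set.Icc (0:ℝ) 1, g x ∈ Set.Icc a b) :
    (volume {p : ℝ × ℝ | p ∈ Set.Icc (0:ℝ) 1 ×ˢ Set.Icc a b ∧
        pointHash f p = pointHash g p}).toReal / (b - a)
      = 1 - (∫ x in Set.Icc (0:ℝ) 1, |f x - g x|) / (b - a) := by
  rw [volume_hashCollisions hab.le measurableSet_Icc measure_Icc_lt_top.ne hfmeas hgmeas hf hg
    hfr hgr, Real.volume_real_Icc_of_le zero_le_one, sub_zero, one_mul]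
  field_simp [sub_ne_zero.mpr hab.ne']
end

section
/- For any two integrable functions f, g : [0,1] → ℝ, the vertical-shift-invariant L₁ distance D₁↕(f,g) = min over α ∈ ℝ of ∫₀¹ |f(x) + α - g(x)| dx satisfies D₁↕(f,g) ≤ L₁(f̂, ĝ) ≤ 2·D₁↕(f,g), where f̂(x) = f(x) - ∫₀¹ f(t) dt is the mean-reduction of f. -/
open MeasureTheory

/-!
Both bounds compare `f̂ - ĝ` with `f + α - g`, which differ by the constant `∫ f + α - ∫ g`.
For `α = ∫ g - ∫ f` they coincide, giving the lower bound. For any `α`, the function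
`h = f + α - g` has `f̂ - ĝ = h - ∫ h`, and `∫ |h - ∫ h| ≤ ∫ |h| + |∫ h| ≤ 2 ∫ |h|`
on a probability space, giving the upper bound.
-/

section ShiftInvariantL1

variable {Ω : Type*} [MeasurableSpace Ω]

lemma iInf_integral_abs_add_sub_le (μ : Measure Ω) (f g : Ω → ℝ) (a b : ℝ) :
    (⨅ α : ℝ, ∫ x, |f x + α - g x| ∂μ) ≤ ∫ x, |(f x - a) - (g x - b)| ∂μ := by
  have hbdd : BddBelow (Set.range fun α : ℝ => ∫ x, |f x + α - g x| ∂μ) :=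
    ⟨0, Set.forall_mem_range.2 fun _ => integral_nonneg fun _ => abs_nonneg _⟩
  have hshift : ∀ x, f x + (b - a) - g x = (f x - a) - (g x - b) := fun x => by ring
  simpa only [hshift] using ciInf_le hbdd (b - a)

variable {μ : Measure Ω} [IsProbabilityMeasure μ]

lemma integral_abs_sub_integral_le {h : Ω → ℝ} (hh : Integrable h μ) :
    ∫ x, |h x - ∫ y, h y ∂μ| ∂μ ≤ 2 * ∫ x, |h x| ∂μ :=
  calc ∫ x, |h x - ∫ y, h y ∂μ| ∂μ ≤ ∫ x, (|h x| + |∫ y, h y ∂μ|) ∂μ :=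
        integral_mono (hh.sub (integrable_const _)).abs (hh.abs.add (integrable_const _))
          fun _ => abs_sub _ _
    _ = ∫ x, |h x| ∂μ + |∫ y, h y ∂μ| := by
        rw [integral_add hh.abs (integrable_const _), integral_const, probReal_univ, one_smul]
    _ ≤ ∫ x, |h x| ∂μ + ∫ x, |h x| ∂μ := by gcongr; exact abs_integral_le_integral_abs
    _ = 2 * ∫ x, |h x| ∂μ := by ring

lemma integral_abs_sub_sub_integral_le {f g : Ω → ℝ} (hf : Integrable f μ)
    (hg : Integrable g μ) (α : ℝ) :
    ∫ x, |(f x - ∫ t, f t ∂μ) - (g x - ∫ t, g t ∂μ)| ∂μ ≤ 2 * ∫ x, |f x + α - g x| ∂μ := by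
  have hfα : Integrable (fun x => f x + α) μ := hf.add (integrable_const α)
  have hmean : ∫ x, (f x + α - g x) ∂μ = ∫ t, f t ∂μ + α - ∫ t, g t ∂μ := by
    rw [integral_sub hfα hg, integral_add hf (integrable_const α),
      integral_const, probReal_univ, one_smul]
  convert integral_abs_sub_integral_le (h := fun x => f x + α - g x) (hfα.sub hg) using 4 with x
  rw [hmean]
  ring

lemma integral_abs_sub_sub_integral_le_two_mul_iInf {f g : Ω → ℝ} (hf : Integrable f μ)
    (hg : Integrable g μ) :
    ∫ x, |(f x - ∫ t, f t ∂μ) - (g x - ∫ t, g t ∂μ)| ∂μ ≤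
      2 * ⨅ α : ℝ, ∫ x, |f x + α - g x| ∂μ := by
  rw [Real.mul_iInf_of_nonneg zero_le_two]
  exact le_ciInf (integral_abs_sub_sub_integral_le hf hg)

end ShiftInvariantL1

/-- The mean-reduction reduces the vertical-shift-invariant `L₁` distance `D₁↕` to `L₁`
within a factor of `2`: `D₁↕(f,g) ≤ L₁(f̂, ĝ) ≤ 2 · D₁↕(f,g)`. -/
theorem stmt1 (f g : ℝ → ℝ)
    (hf : IntegrableOn f (Set.Icc 0 1)) (hg : IntegrableOn g (Set.Icc 0 1)) :
    (⨅ α : ℝ, ∫ x in Set.Icc (0:ℝ) 1, |f x + α - g x|) ≤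
      (∫ x in Set.Icc (0:ℝ) 1,
        |(f x - ∫ t in Set.Icc (0:ℝ) 1, f t) - (g x - ∫ t in Set.Icc (0:ℝ) 1, g t)|) ∧
    (∫ x in Set.Icc (0:ℝ) 1,
        |(f x - ∫ t in Set.Icc (0:ℝ) 1, f t) - (g x - ∫ t in Set.Icc (0:ℝ) 1, g t)|) ≤
      2 * ⨅ α : ℝ, ∫ x in Set.Icc (0:ℝ) 1, |f x + α - g x| := by
  have : IsProbabilityMeasure (volume.restrict (Set.Icc (0:ℝ) 1)) := ⟨by simp⟩
  exact ⟨iInf_integral_abs_add_sub_le _ f g _ _,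
    integral_abs_sub_sub_integral_le_two_mul_iInf hf hg⟩
end

section
/- Let f, g : [0,1] → [a,b] be integrable functions with vertical-shift-invariant L₁ distance r = D₁↕(f,g) > 0. Then L₁(f̂, ĝ) ≤ (2 - r/(b-a)) · r, where f̂ and ĝ are the mean-reductions of f and g. -/
/-!
Write `h = f - g`, `m = ∫ h` and `φ c = ∫ |h + c|`, so that `r = inf φ` and the left-hand side
is `φ (-m)`. The function `φ` is convex and coercive, hence attains `r` at some `β`, and the bound
`|h| ≤ M = b - a` gives `φ M = M + m` and `φ (-M) = M - m`. Up to the reflection `h ↦ -h` we have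
`β ≤ -m ≤ M`, and convexity bounds `φ (-m)` by the chord through `(β, r)` and `(M, M + m)`.
Since also `-m - β ≤ |m + β| ≤ r` and `r ≤ M ± m`, this chord value is at most `(2 - r/M) r`.
-/

open MeasureTheory Set Filter

lemma ConvexOn.sub_mul_le_of_le_of_le {s : Set ℝ} {f : ℝ → ℝ} (hf : ConvexOn ℝ s f)
    {x y z : ℝ} (hx : x ∈ s) (hz : z ∈ s) (hxy : x ≤ y) (hyz : y ≤ z) :
    (z - x) * f y ≤ (z - y) * f x + (y - x) * f z := by
  rcases hxy.eq_or_lt with rfl | hxy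
  · simp
  rcases hyz.eq_or_lt with rfl | hyz
  · simp
  exact hf.secant_mono_aux1 hx hz hxy hyz

lemma le_two_sub_div_mul_of_mul_le {M r s t S : ℝ} (hr : 0 < r) (hrs : r ≤ s)
    (hsM : s + r ≤ 2 * M) (ht : 0 ≤ t) (htr : t ≤ r) (hS : (s + t) * S ≤ s * r + t * s) :
    S ≤ (2 - r / M) * r := by
  have hM : 0 < M := by linarith
  rw [show (2 - r / M) * r = r * (2 * M - r) / M by field_simp, le_div_iff₀ hM]
  nlinarith [mul_nonneg (sub_nonneg.2 hrs) (sub_nonneg.2 htr),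
    mul_nonneg hr.le (by linarith : 0 ≤ 2 * M - r - s)]

section ShiftedL1

variable {α : Type*} [MeasurableSpace α] {μ : Measure α} [IsProbabilityMeasure μ] {h : α → ℝ}
  {M : ℝ}

lemma integral_add_const_of_isProbabilityMeasure (hh : Integrable h μ) (c : ℝ) :
    ∫ x, (h x + c) ∂μ = (∫ x, h x ∂μ) + c := by
  simp [integral_add hh (integrable_const c)]

lemma convexOn_integral_abs_add_const (hh : Integrable h μ) :
    ConvexOn ℝ univ fun c => ∫ x, |h x + c| ∂μ := by
  refine ⟨convex_univ, fun c _ d _ a b ha hb hab => ?_⟩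
  have hint : ∀ e : ℝ, Integrable (fun x => |h x + e|) μ := fun e =>
    (hh.add (integrable_const e)).abs
  simp only [smul_eq_mul, ← integral_const_mul, ← integral_add ((hint c).const_mul a)
    ((hint d).const_mul b)]
  refine integral_mono (hint _) (((hint c).const_mul a).add ((hint d).const_mul b)) fun x => ?_
  calc |h x + (a * c + b * d)| = |a * (h x + c) + b * (h x + d)| := by
        congr 1; linear_combination (-h x) * hab
    _ ≤ a * |h x + c| + b * |h x + d| := by
        simpa [abs_mul, abs_of_nonneg ha, abs_of_nonneg hb] using
          abs_add_le (a * (h x + c)) (b * (h x + d))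

lemma abs_integral_add_const_le (hh : Integrable h μ) (c : ℝ) :
    |(∫ x, h x ∂μ) + c| ≤ ∫ x, |h x + c| ∂μ := by
  rw [← integral_add_const_of_isProbabilityMeasure hh]
  exact abs_integral_le_integral_abs

lemma exists_forall_integral_abs_add_const_le (hh : Integrable h μ) :
    ∃ β, ∀ c, ∫ x, |h x + β| ∂μ ≤ ∫ x, |h x + c| ∂μ := by
  refine (convexOn_integral_abs_add_const hh).locallyLipschitz.continuous.exists_forall_le ?_
  have hcoercive : Tendsto (fun c : ℝ => |c| - |∫ x, h x ∂μ|) (cocompact ℝ) atTop :=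
    tendsto_atTop_add_const_right _ _ tendsto_norm_cocompact_atTop
  refine tendsto_atTop_mono (fun c => ?_) hcoercive
  calc |c| - |∫ x, h x ∂μ| ≤ |(∫ x, h x ∂μ) + c| := by
        have := abs_add_le (-(∫ x, h x ∂μ)) ((∫ x, h x ∂μ) + c)
        rw [abs_neg, neg_add_cancel_left] at this; linarith
    _ ≤ ∫ x, |h x + c| ∂μ := abs_integral_add_const_le hh c

lemma integral_abs_add_of_abs_le (hh : Integrable h μ) (hM : ∀ᵐ x ∂μ, |h x| ≤ M) :
    ∫ x, |h x + M| ∂μ = (∫ x, h x ∂μ) + M := by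
  rw [← integral_add_const_of_isProbabilityMeasure hh]
  refine integral_congr_ae (hM.mono fun x hx => abs_of_nonneg ?_)
  linarith [neg_abs_le (h x)]

lemma integral_abs_add_neg_of_abs_le (hh : Integrable h μ) (hM : ∀ᵐ x ∂μ, |h x| ≤ M) :
    ∫ x, |h x + -M| ∂μ = M - ∫ x, h x ∂μ := by
  calc ∫ x, |h x + -M| ∂μ = ∫ x, -(h x + -M) ∂μ :=
        integral_congr_ae (hM.mono fun x hx => abs_of_nonpos (by linarith [le_abs_self (h x)]))
    _ = M - ∫ x, h x ∂μ := by
        rw [integral_neg, integral_add_const_of_isProbabilityMeasure hh]; ring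

lemma integral_abs_sub_integral_le_of_le_neg_integral (hh : Integrable h μ)
    (hM : ∀ᵐ x ∂μ, |h x| ≤ M) {β : ℝ} (hβ : ∀ c, ∫ x, |h x + β| ∂μ ≤ ∫ x, |h x + c| ∂μ)
    (hβm : β ≤ -∫ x, h x ∂μ) (hr : 0 < ∫ x, |h x + β| ∂μ) :
    ∫ x, |h x - ∫ t, h t ∂μ| ∂μ ≤
      (2 - (∫ x, |h x + β| ∂μ) / M) * ∫ x, |h x + β| ∂μ := by
  set m := ∫ x, h x ∂μ
  set φ : ℝ → ℝ := fun c => ∫ x, |h x + c| ∂μ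
  have hφM : φ M = m + M := integral_abs_add_of_abs_le hh hM
  have hφnegM : φ (-M) = M - m := integral_abs_add_neg_of_abs_le hh hM
  have hrM : φ β ≤ m + M := hφM ▸ hβ M
  have hrnegM : φ β ≤ M - m := hφnegM ▸ hβ (-M)
  have hchord : (M - β) * φ (-m) ≤ (M - -m) * φ β + (-m - β) * φ M :=
    (convexOn_integral_abs_add_const hh).sub_mul_le_of_le_of_le (mem_univ _) (mem_univ _) hβm
      (by linarith)
  have hβmr : -m - β ≤ φ β := by
    linarith [neg_abs_le (m + β), abs_integral_add_const_le hh β]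
  have hφm : φ (-m) = ∫ x, |h x - m| ∂μ := by simp only [φ, sub_eq_add_neg]
  rw [← hφm]
  refine le_two_sub_div_mul_of_mul_le (s := m + M) (t := -m - β) hr (by linarith) (by linarith)
    (by linarith) hβmr ?_
  rw [hφM] at hchord
  linarith

theorem integral_abs_sub_integral_le_s2 (hh : Integrable h μ) (hM : ∀ᵐ x ∂μ, |h x| ≤ M)
    (hr : 0 < ⨅ c, ∫ x, |h x + c| ∂μ) :
    ∫ x, |h x - ∫ t, h t ∂μ| ∂μ ≤
      (2 - (⨅ c, ∫ x, |h x + c| ∂μ) / M) * ⨅ c, ∫ x, |h x + c| ∂μ := by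
  obtain ⟨β, hβ⟩ := exists_forall_integral_abs_add_const_le hh
  have hinf : ⨅ c, ∫ x, |h x + c| ∂μ = ∫ x, |h x + β| ∂μ :=
    le_antisymm (ciInf_le ⟨_, forall_mem_range.2 hβ⟩ β) (le_ciInf hβ)
  rw [hinf] at hr ⊢
  rcases le_total β (-∫ x, h x ∂μ) with hβm | hβm
  · exact integral_abs_sub_integral_le_of_le_neg_integral hh hM hβ hβm hr
  · have hneg : ∀ c, ∫ x, |-h x + -c| ∂μ = ∫ x, |h x + c| ∂μ := fun c => by
      simp_rw [← neg_add, abs_neg]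
    have hflip : ∀ x, |-h x - ∫ t, -h t ∂μ| = |h x - ∫ t, h t ∂μ| := fun x => by
      rw [integral_neg, ← abs_neg]; ring_nf
    simpa [hneg, hflip] using
      integral_abs_sub_integral_le_of_le_neg_integral (h := fun x => -h x) hh.neg
        (by simpa using hM) (β := -β) (fun c => by simpa only [← hneg, neg_neg] using hβ (-c))
        (by rw [integral_neg]; linarith) (by simpa [hneg] using hr)

end ShiftedL1

theorem stmt2_general (a b r : ℝ) (f g : ℝ → ℝ)
    (hf : IntegrableOn f (Set.Icc 0 1)) (hg : IntegrableOn g (Set.Icc 0 1))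
    (hfr : ∀ x ∈ Set.Icc (0:ℝ) 1, f x ∈ Set.Icc a b)
    (hgr : ∀ x ∈ Set.Icc (0:ℝ) 1, g x ∈ Set.Icc a b)
    (hr : r = ⨅ α : ℝ, ∫ x in Set.Icc (0:ℝ) 1, |f x + α - g x|)
    (hr0 : 0 < r) :
    (∫ x in Set.Icc (0:ℝ) 1,
        |(f x - ∫ t in Set.Icc (0:ℝ) 1, f t) - (g x - ∫ t in Set.Icc (0:ℝ) 1, g t)|) ≤
      (2 - r / (b - a)) * r := by
  have : IsProbabilityMeasure (volume.restrict (Icc (0:ℝ) 1)) := ⟨by simp⟩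
  have hbound : ∀ᵐ x ∂volume.restrict (Icc (0:ℝ) 1), |f x - g x| ≤ b - a :=
    ae_restrict_of_forall_mem measurableSet_Icc fun x hx => by
      have hfx := hfr x hx
      have hgx := hgr x hx
      exact abs_sub_le_iff.2 ⟨by linarith [hfx.2, hgx.1], by linarith [hfx.1, hgx.2]⟩
  have hr' : r = ⨅ c, ∫ x in Icc (0:ℝ) 1, |f x - g x + c| := by
    simp only [hr, sub_add_eq_add_sub]
  have hmean : ∀ x, (f x - ∫ t in Icc (0:ℝ) 1, f t) - (g x - ∫ t in Icc (0:ℝ) 1, g t) =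
      (f x - g x) - ∫ t in Icc (0:ℝ) 1, (f t - g t) := fun x => by
    rw [integral_sub hf hg]; ring
  simp only [hmean, hr']
  exact integral_abs_sub_integral_le_s2 (hf.sub hg) hbound (hr' ▸ hr0)

/-- Tight bound for the mean-reduction: if `f, g : [0,1] → [a,b]` have
`D₁↕(f,g) = r > 0`, then `L₁(f̂, ĝ) ≤ (2 - r/(b-a)) · r`. -/
theorem stmt2 (a b r : ℝ) (hab : a < b) (f g : ℝ → ℝ)
    (hf : IntegrableOn f (Set.Icc 0 1)) (hg : IntegrableOn g (Set.Icc 0 1))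
    (hfr : ∀ x ∈ Set.Icc (0:ℝ) 1, f x ∈ Set.Icc a b)
    (hgr : ∀ x ∈ Set.Icc (0:ℝ) 1, g x ∈ Set.Icc a b)
    (hr : r = ⨅ α : ℝ, ∫ x in Set.Icc (0:ℝ) 1, |f x + α - g x|)
    (hr0 : 0 < r) :
    (∫ x in Set.Icc (0:ℝ) 1,
        |(f x - ∫ t in Set.Icc (0:ℝ) 1, f t) - (g x - ∫ t in Set.Icc (0:ℝ) 1, g t)|) ≤
      (2 - r / (b - a)) * r :=
  stmt2_general a b r f g hf hg hfr hgr hr hr0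
end

section
/- The bound L₁(f̂,ĝ) ≤ (2 - r/(b-a))·r is tight: for a < b and 0 < r < b - a, define f₀(x) = a for x ∈ [0, 1 - r/(2(b-a))] and f₀(x) = b otherwise, and g₀(x) = b for x ∈ [0, 1 - r/(2(b-a))] and g₀(x) = a otherwise. Then D₁↕(f₀, g₀) = r and L₁(f̂₀, ĝ₀) = (2 - r/(b-a)) · r. -/
/-!
Both functions are step functions with the same jump point `c = 1 - r/(2(b-a)) ≥ 1/2`, so every
integral in sight is `c · (value on [0,c]) + (1-c) · (value on (c,1])`. For the vertical
distance this is `c |α - (b-a)| + (1-c) |α + (b-a)|`, a weighted sum of distances to two points,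
minimised at the point of heavier weight with value `(1-c) · 2(b-a) = r`. After centring,
`f̂₀ - ĝ₀` takes the values `-r` and `2c(b-a) = c r/(1-c)`, whence
`L₁(f̂₀, ĝ₀) = 2cr = (2 - r/(b-a)) r`.
-/

open MeasureTheory Set

lemma setIntegral_Icc_ite_le {u c v : ℝ} (huc : u ≤ c) (hcv : c ≤ v) (p q : ℝ) :
    ∫ x in Icc u v, (if x ≤ c then p else q) = (c - u) * p + (v - c) * q := by
  have hleft : EqOn (fun x : ℝ => if x ≤ c then p else q) (fun _ => p) (Ioc u c) :=
    fun x hx => if_pos hx.2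
  have hright : EqOn (fun x : ℝ => if x ≤ c then p else q) (fun _ => q) (Ioc c v) :=
    fun x hx => if_neg (not_le.2 hx.1)
  rw [integral_Icc_eq_integral_Ioc, ← Ioc_union_Ioc_eq_Ioc huc hcv,
    setIntegral_union (Ioc_disjoint_Ioc_of_le le_rfl) measurableSet_Ioc
      ((integrableOn_const measure_Ioc_lt_top.ne).congr_fun hleft.symm measurableSet_Ioc)
      ((integrableOn_const measure_Ioc_lt_top.ne).congr_fun hright.symm measurableSet_Ioc),
    setIntegral_congr_fun measurableSet_Ioc hleft, setIntegral_congr_fun measurableSet_Ioc hright,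
    setIntegral_const, setIntegral_const, measureReal_def, measureReal_def, Real.volume_Ioc,
    Real.volume_Ioc, ENNReal.toReal_ofReal (sub_nonneg.2 huc),
    ENNReal.toReal_ofReal (sub_nonneg.2 hcv), smul_eq_mul, smul_eq_mul]

lemma iInf_mul_abs_sub_add_mul_abs_sub {v w x y : ℝ} (hw : 0 ≤ w) (hwv : w ≤ v)
    (hxy : x ≤ y) : ⨅ α : ℝ, (v * |α - y| + w * |α - x|) = w * (y - x) := by
  have hleast : IsLeast (range fun α : ℝ => v * |α - y| + w * |α - x|) (w * (y - x)) := by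
    refine ⟨⟨y, by simp [abs_of_nonneg (sub_nonneg.2 hxy)]⟩,
      forall_mem_range.2 fun α => ?_⟩
    have htriangle : y - x ≤ |α - y| + |α - x| := by
      linarith [abs_sub_le y α x, abs_sub_comm y α, le_abs_self (y - x)]
    calc w * (y - x) ≤ w * (|α - y| + |α - x|) := mul_le_mul_of_nonneg_left htriangle hw
      _ ≤ v * |α - y| + w * |α - x| := by nlinarith [abs_nonneg (α - y)]
  exact hleast.isGLB.ciInf_eq

theorem stmt3_general (a b r : ℝ) (hr0 : 0 < r) (hrb : r < b - a)
    (f₀ g₀ : ℝ → ℝ)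
    (hf : ∀ x, f₀ x = if x ≤ 1 - r / (2 * (b - a)) then a else b)
    (hg : ∀ x, g₀ x = if x ≤ 1 - r / (2 * (b - a)) then b else a) :
    (⨅ α : ℝ, ∫ x in Set.Icc (0:ℝ) 1, |f₀ x + α - g₀ x|) = r ∧
    (∫ x in Set.Icc (0:ℝ) 1,
        |(f₀ x - ∫ t in Set.Icc (0:ℝ) 1, f₀ t) - (g₀ x - ∫ t in Set.Icc (0:ℝ) 1, g₀ t)|) =
      (2 - r / (b - a)) * r := by
  set c := 1 - r / (2 * (b - a)) with hc
  have hba : 0 < b - a := hr0.trans hrb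
  have hr : r = (1 - c) * (2 * (b - a)) := by rw [hc]; field_simp; ring
  have hc1 : c ≤ 1 := by rw [hc]; linarith [div_pos hr0 (by positivity : (0:ℝ) < 2 * (b - a))]
  have hc_half : 1 - c ≤ c := by nlinarith
  have hstep (φ : ℝ → ℝ → ℝ) :
      ∫ x in Icc (0:ℝ) 1, φ (f₀ x) (g₀ x) = c * φ a b + (1 - c) * φ b a := by
    have hφ (x : ℝ) : φ (f₀ x) (g₀ x) = if x ≤ c then φ a b else φ b a := by
      rw [hf, hg]; split_ifs <;> rfl
    rw [setIntegral_congr_fun measurableSet_Icc fun x _ => hφ x,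
      setIntegral_Icc_ite_le (by linarith) hc1, sub_zero]
  constructor
  · have hI (α : ℝ) : ∫ x in Icc (0:ℝ) 1, |f₀ x + α - g₀ x| =
        c * |α - (b - a)| + (1 - c) * |α - (a - b)| := by
      rw [hstep fun p q => |p + α - q|]; ring_nf
    simp only [hI]
    rw [iInf_mul_abs_sub_add_mul_abs_sub (by linarith) hc_half (by linarith), hr]
    ring
  · have hmean_f : ∫ t in Icc (0:ℝ) 1, f₀ t = c * a + (1 - c) * b := hstep fun p _ => p
    have hmean_g : ∫ t in Icc (0:ℝ) 1, g₀ t = c * b + (1 - c) * a := hstep fun _ q => q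
    rw [hmean_f, hmean_g,
      hstep fun p q => |(p - (c * a + (1 - c) * b)) - (q - (c * b + (1 - c) * a))|,
      show a - (c * a + (1 - c) * b) - (b - (c * b + (1 - c) * a)) = -r by rw [hr]; ring,
      show b - (c * a + (1 - c) * b) - (a - (c * b + (1 - c) * a)) = 2 * c * (b - a) by ring,
      abs_neg, abs_of_pos hr0, abs_of_nonneg (by nlinarith)]
    rw [hc]; field_simp; ring

/-- Tightness of the bound `L₁(f̂, ĝ) ≤ (2 - r/(b-a)) · r`: the pair of step functions
`f₀, g₀` attains `D₁↕(f₀, g₀) = r` and `L₁(f̂₀, ĝ₀) = (2 - r/(b-a)) · r`. -/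
theorem stmt3 (a b r : ℝ) (hab : a < b) (hr0 : 0 < r) (hrb : r < b - a)
    (f₀ g₀ : ℝ → ℝ)
    (hf : ∀ x, f₀ x = if x ≤ 1 - r / (2 * (b - a)) then a else b)
    (hg : ∀ x, g₀ x = if x ≤ 1 - r / (2 * (b - a)) then b else a) :
    (⨅ α : ℝ, ∫ x in Set.Icc (0:ℝ) 1, |f₀ x + α - g₀ x|) = r ∧
    (∫ x in Set.Icc (0:ℝ) 1,
        |(f₀ x - ∫ t in Set.Icc (0:ℝ) 1, f₀ t) - (g₀ x - ∫ t in Set.Icc (0:ℝ) 1, g₀ t)|) =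
      (2 - r / (b - a)) * r :=
  stmt3_general a b r hr0 hrb f₀ g₀ hf hg
end

section
/- Let t₁, …, tₘ be real numbers with t₁ ∈ [0, 2π], |tᵢ - tᵢ₋₁| ≤ π for all i = 2,…,m, and tₘ - t₁ ∈ [π, 3π]. Then max_i tᵢ - min_i tᵢ ≤ (⌊m/2⌋ + 1)π. -/
open Real

/-- Span bound for the step heights of the turning function of an `m`-gon:
if `t₁ ∈ [0, 2π]`, consecutive steps differ by at most `π`, and `tₘ - t₁ ∈ [π, 3π]`,
then `max_i tᵢ - min_i tᵢ ≤ (⌊m/2⌋ + 1)π`. -/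
theorem stmt8 (m : ℕ) (t : ℕ → ℝ)
    (h1 : t 1 ∈ Set.Icc 0 (2 * π))
    (hstep : ∀ i, 2 ≤ i → i ≤ m → |t i - t (i - 1)| ≤ π)
    (htot : t m - t 1 ∈ Set.Icc π (3 * π)) :
    ∀ i j, 1 ≤ i → i ≤ m → 1 ≤ j → j ≤ m →
      t i - t j ≤ (((m / 2 : ℕ) : ℝ) + 1) * π := by
  have hpi := Real.pi_pos
  have chain : ∀ a b : ℕ, 1 ≤ a → a ≤ b → b ≤ m →
      |t b - t a| ≤ ((b - a : ℕ) : ℝ) * π := by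
    intro a b ha hab hbm
    induction b with
    | zero => omega
    | succ n ih =>
      rcases Nat.eq_or_lt_of_le hab with h | h
      · rw [h]; simp [hpi.le]
      · have hn : a ≤ n := by omega
        have h1' := ih hn (by omega)
        have h2 := hstep (n + 1) (by omega) hbm
        simp only [Nat.add_sub_cancel] at h2
        have : |t (n + 1) - t a| ≤ |t (n + 1) - t n| + |t n - t a| := by
          calc |t (n + 1) - t a| = |(t (n + 1) - t n) + (t n - t a)| := by ring_nf
            _ ≤ _ := abs_add_le _ _
        have hcast : ((n + 1 - a : ℕ) : ℝ) = ((n - a : ℕ) : ℝ) + 1 := by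
          have : n + 1 - a = (n - a) + 1 := by omega
          rw [this]; push_cast; ring
        rw [hcast]
        nlinarith [h1', h2, this]
  intro i j hi him hj hjm
  obtain ⟨hlo, hhi⟩ := htot
  rcases le_total j i with hji | hij
  · -- d = i - j
    by_cases hd : i - j ≤ m / 2 + 1
    · have h := chain j i hj hji him
      have : t i - t j ≤ ((i - j : ℕ) : ℝ) * π := (abs_le.mp h).2
      have hc : ((i - j : ℕ) : ℝ) ≤ ((m / 2 : ℕ) : ℝ) + 1 := by
        exact_mod_cast Nat.cast_le.mpr (by omega : (i - j : ℕ) ≤ m / 2 + 1)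
      nlinarith
    · -- route through endpoints: t i - t j = -(t m - t i) + (t m - t 1) + (t 1 - t j)
      have hA := chain i m hi him le_rfl
      have hB := chain j m hj hjm le_rfl
      have hA' : -(((m - i : ℕ) : ℝ) * π) ≤ t m - t i := (abs_le.mp hA).1
      have hB' : -(((m - j : ℕ) : ℝ) * π) ≤ t m - t j := (abs_le.mp hB).1
      have hB'' : t j - t m ≤ ((m - j : ℕ) : ℝ) * π := by linarith
      -- t i - t j = (t i - t m) + (t m - t 1) - (t j - t 1)
      have key : t i - t j ≤ ((m - i : ℕ) : ℝ) * π + 3 * π + ((j - 1 : ℕ) : ℝ) * π := by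
        have hC := chain 1 j le_rfl hj hjm
        have hC' : -(((j - 1 : ℕ) : ℝ) * π) ≤ t j - t 1 := (abs_le.mp hC).1
        have : t i - t j = (t i - t m) + (t m - t 1) + (t 1 - t j) := by ring
        rw [this]
        have h1 : t i - t m ≤ ((m - i : ℕ) : ℝ) * π := by linarith
        linarith
      have hnat : (m - i) + (j - 1) + 3 ≤ m / 2 + 1 := by omega
      have hc : ((m - i : ℕ) : ℝ) + ((j - 1 : ℕ) : ℝ) + 3 ≤ ((m / 2 : ℕ) : ℝ) + 1 := by
        have h := (Nat.cast_le (α := ℝ)).mpr hnat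
        push_cast at h ⊢
        linarith
      nlinarith
  · -- i ≤ j, d = j - i
    by_cases hd : j - i ≤ m / 2 + 1
    · have h := chain i j hi hij hjm
      have : t i - t j ≤ ((j - i : ℕ) : ℝ) * π := by
        have := (abs_le.mp h).1; linarith
      have hc : ((j - i : ℕ) : ℝ) ≤ ((m / 2 : ℕ) : ℝ) + 1 := by
        exact_mod_cast Nat.cast_le.mpr (by omega : (j - i : ℕ) ≤ m / 2 + 1)
      nlinarith
    · -- t i - t j = (t i - t 1) - (t m - t 1) + (t m - t j)
      have hA := chain 1 i le_rfl hi him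
      have hB := chain j m hj hjm le_rfl
      have hA' : t i - t 1 ≤ ((i - 1 : ℕ) : ℝ) * π := (abs_le.mp hA).2
      have hB' : t m - t j ≤ ((m - j : ℕ) : ℝ) * π := (abs_le.mp hB).2
      have key : t i - t j ≤ ((i - 1 : ℕ) : ℝ) * π - π + ((m - j : ℕ) : ℝ) * π := by
        have : t i - t j = (t i - t 1) - (t m - t 1) + (t m - t j) := by ring
        rw [this]; linarith
      have hnat : (i - 1) + (m - j) ≤ m / 2 + 2 := by omega
      have hc : ((i - 1 : ℕ) : ℝ) + ((m - j : ℕ) : ℝ) ≤ ((m / 2 : ℕ) : ℝ) + 2 := by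
        exact_mod_cast Nat.cast_le.mpr hnat
      nlinarith
end

section
/- Let t₁, …, tₘ be real numbers with t₁ ∈ [0, 2π], |tᵢ - tᵢ₋₁| ≤ π for all i, and Σᵢ₌₂ᵐ (tᵢ - tᵢ₋₁) ∈ [π, 3π]. Let P = {i : tᵢ - tᵢ₋₁ > 0} and define S_P = Σ_{i ∈ P} (tᵢ - tᵢ₋₁). Then S_P ≤ (⌊m/2⌋ + 1)π. -/
open Real

/-- Bound on the total positive turning: if the turning angles `Δᵢ = tᵢ - tᵢ₋₁` satisfy
`|Δᵢ| ≤ π` and `Σᵢ₌₂ᵐ Δᵢ ∈ [π, 3π]`, then the sum `S_P` of the positive `Δᵢ` is at most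
`(⌊m/2⌋ + 1)π`. -/
theorem stmt9 (m : ℕ) (t : ℕ → ℝ)
    (h1 : t 1 ∈ Set.Icc 0 (2 * π))
    (hstep : ∀ i, 2 ≤ i → i ≤ m → |t i - t (i - 1)| ≤ π)
    (htot : (∑ i ∈ Finset.Icc 2 m, (t i - t (i - 1))) ∈ Set.Icc π (3 * π)) :
    (∑ i ∈ (Finset.Icc 2 m).filter (fun i => 0 < t i - t (i - 1)), (t i - t (i - 1))) ≤
      (((m / 2 : ℕ) : ℝ) + 1) * π := by
  have hπ : (0:ℝ) ≤ π := Real.pi_pos.le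
  set F := Finset.Icc 2 m with hF
  set P := F.filter (fun i => 0 < t i - t (i - 1)) with hP
  set N := F.filter (fun i => ¬ 0 < t i - t (i - 1)) with hN
  have hmem : ∀ i ∈ F, |t i - t (i - 1)| ≤ π := by
    intro i hi
    rw [hF, Finset.mem_Icc] at hi
    exact hstep i hi.1 hi.2
  -- S_P ≤ card P * π
  have hSP : (∑ i ∈ P, (t i - t (i - 1))) ≤ (P.card : ℝ) * π := by
    calc (∑ i ∈ P, (t i - t (i - 1))) ≤ ∑ i ∈ P, π := by
          apply Finset.sum_le_sum
          intro i hi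
          exact (abs_le.mp (hmem i (Finset.mem_of_mem_filter i hi))).2
      _ = (P.card : ℝ) * π := by rw [Finset.sum_const, nsmul_eq_mul]
  -- S_N ≥ - card N * π
  have hSN : -((N.card : ℝ) * π) ≤ (∑ i ∈ N, (t i - t (i - 1))) := by
    calc -((N.card : ℝ) * π) = ∑ i ∈ N, (-π) := by
          rw [Finset.sum_const, nsmul_eq_mul]; ring
      _ ≤ ∑ i ∈ N, (t i - t (i - 1)) := by
          apply Finset.sum_le_sum
          intro i hi
          exact (abs_le.mp (hmem i (Finset.mem_of_mem_filter i hi))).1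
  have hsplit : (∑ i ∈ P, (t i - t (i - 1))) + (∑ i ∈ N, (t i - t (i - 1)))
      = ∑ i ∈ F, (t i - t (i - 1)) :=
    Finset.sum_filter_add_sum_filter_not F _ _
  have hcard : P.card + N.card = m + 1 - 2 := by
    rw [hP, hN, Finset.card_filter_add_card_filter_not, hF, Nat.card_Icc]
  by_cases hp : P.card ≤ m / 2 + 1
  · calc (∑ i ∈ P, (t i - t (i - 1))) ≤ (P.card : ℝ) * π := hSP
      _ ≤ (((m / 2 : ℕ) : ℝ) + 1) * π := by
          apply mul_le_mul_of_nonneg_right _ hπ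
          have : ((P.card : ℝ)) ≤ ((m / 2 + 1 : ℕ) : ℝ) := by exact_mod_cast hp
          push_cast at this ⊢
          linarith
  · push_neg at hp
    have hn : N.card + 3 ≤ m / 2 + 1 := by omega
    have hT : (∑ i ∈ F, (t i - t (i - 1))) ≤ 3 * π := htot.2
    have : (∑ i ∈ P, (t i - t (i - 1))) ≤ ((N.card : ℝ) + 3) * π := by
      have := hsplit
      nlinarith [hSN, hT]
    calc (∑ i ∈ P, (t i - t (i - 1))) ≤ ((N.card : ℝ) + 3) * π := this
      _ ≤ (((m / 2 : ℕ) : ℝ) + 1) * π := by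
          apply mul_le_mul_of_nonneg_right _ hπ
          have : ((N.card + 3 : ℕ) : ℝ) ≤ ((m / 2 + 1 : ℕ) : ℝ) := by exact_mod_cast hn
          push_cast at this ⊢
          linarith
end
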